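/- arXiv:2602.16274 — 5 statements merged into one kernel-verified Lean document; each statement's English description precedes it below -/
import Mathlib

section
/- Let Q* : A → ℝ achieve its maximum uniquely at a*, with gap g := Q*(a*) − max_{a ≠ a*} Q*(a) > 0. Let π₀ be the Dirac distribution at a*. Then for every λ > 0 and every Q : A → ℝ, the total deviation satisfies max_a |σ(Q/λ)(a) − π₀(a)| ≤ ‖Q − Q*‖_∞/λ + |A|·exp(−g/λ). -/
/-!
Write `σ(q)(a) = (1 + R_q(a))⁻¹` with `R_q(a) = ∑_{b ≠ a} exp ((q b - q a) / λ)`. Perturbing `q` by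
at most `ε` in sup norm scales every term of `R_q(a)` by at most `exp (2ε / λ)`, which moves
`(1 + R)⁻¹` by at most `1 - exp (-ε / λ) ≤ ε / λ`. For `Q*` itself, the gap makes
`R_{Q*}(a*) ≤ |A| exp (-g / λ)` and `R_{Q*}(a) ≥ exp (g / λ)` for `a ≠ a*`. The triangle inequality
through `σ(Q* / λ)` combines the two estimates.
-/

open Finset

/-- Boltzmann (softmax) distribution with temperature `lam`. -/
noncomputable def softmax {A : Type*} [Fintype A] (q : A → ℝ) (lam : ℝ) (a : A) : ℝ :=
  Real.exp (q a / lam) / ∑ b, Real.exp (q b / lam)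

open Real

lemma inv_one_add_sub_inv_one_add_sq_mul_le {R u : ℝ} (hR : 0 ≤ R) (hu : 1 ≤ u) :
    (1 + R)⁻¹ - (1 + u ^ 2 * R)⁻¹ ≤ 1 - u⁻¹ := by
  have hu0 : 0 < u := by linarith
  rw [inv_sub_inv (by positivity) (by positivity), div_le_iff₀ (by positivity),
    show 1 - u⁻¹ = (u - 1) / u by field_simp, div_mul_eq_mul_div, le_div_iff₀ hu0]
  -- the difference of the two sides is `(u - 1) * ((u * R - 1) ^ 2 + (1 + u) * R)`
  nlinarith [mul_nonneg (sub_nonneg.2 hu) (sq_nonneg (u * R - 1)), mul_nonneg hR (sub_nonneg.2 hu)]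

lemma softmax_nonneg {A : Type*} [Fintype A] (q : A → ℝ) (lam : ℝ) (a : A) :
    0 ≤ softmax q lam a := by
  unfold softmax; positivity

section Softmax

variable {A : Type*} [Fintype A] [DecidableEq A]

lemma softmax_eq_inv (q : A → ℝ) (lam : ℝ) (a : A) :
    softmax q lam a = (1 + ∑ b ∈ univ.erase a, exp ((q b - q a) / lam))⁻¹ := by
  have hsum : ∑ b, exp (q b / lam)
      = exp (q a / lam) * (1 + ∑ b ∈ univ.erase a, exp ((q b - q a) / lam)) := by
    rw [mul_add, mul_one, mul_sum, ← add_sum_erase _ _ (mem_univ a)]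
    congr 1
    refine sum_congr rfl fun b _ => ?_
    rw [← exp_add, sub_div, add_sub_cancel]
  rw [softmax, hsum, div_mul_eq_div_div, div_self (exp_pos _).ne', one_div]

lemma softmax_le_one (q : A → ℝ) (lam : ℝ) (a : A) : softmax q lam a ≤ 1 := by
  rw [softmax_eq_inv]
  exact inv_le_one_of_one_le₀ (le_add_of_nonneg_right (sum_nonneg fun _ _ => (exp_pos _).le))

lemma softmax_sub_softmax_le {x y : A → ℝ} {lam ε : ℝ} (hlam : 0 < lam)
    (h : ∀ b, |x b - y b| ≤ ε) (a : A) :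
    softmax x lam a - softmax y lam a ≤ ε / lam := by
  rw [softmax_eq_inv, softmax_eq_inv]
  set Rx := ∑ b ∈ univ.erase a, exp ((x b - x a) / lam)
  set Ry := ∑ b ∈ univ.erase a, exp ((y b - y a) / lam)
  have hε : 0 ≤ ε / lam := div_nonneg ((abs_nonneg _).trans (h a)) hlam.le
  have hRx : 0 ≤ Rx := sum_nonneg fun _ _ => (exp_pos _).le
  have hRy : Ry ≤ exp (ε / lam) ^ 2 * Rx := by
    rw [mul_sum]
    refine sum_le_sum fun b _ => ?_
    rw [sq, ← exp_add, ← exp_add, ← add_div, ← add_div]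
    gcongr
    linarith [abs_le.1 (h a), abs_le.1 (h b)]
  calc (1 + Rx)⁻¹ - (1 + Ry)⁻¹ ≤ (1 + Rx)⁻¹ - (1 + exp (ε / lam) ^ 2 * Rx)⁻¹ := by
        gcongr
    _ ≤ 1 - (exp (ε / lam))⁻¹ := inv_one_add_sub_inv_one_add_sq_mul_le hRx (one_le_exp hε)
    _ ≤ ε / lam := by rw [← exp_neg]; linarith [add_one_le_exp (-(ε / lam))]

lemma abs_softmax_sub_softmax_le {x y : A → ℝ} {lam ε : ℝ} (hlam : 0 < lam)
    (h : ∀ b, |x b - y b| ≤ ε) (a : A) :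
    |softmax x lam a - softmax y lam a| ≤ ε / lam :=
  abs_sub_le_iff.2 ⟨softmax_sub_softmax_le hlam h a,
    softmax_sub_softmax_le hlam (fun b => abs_sub_comm (x b) (y b) ▸ h b) a⟩

variable {q : A → ℝ} {astar : A} {g lam : ℝ}

lemma one_sub_softmax_le_of_gap (hgap : ∀ a, a ≠ astar → q a ≤ q astar - g) (hlam : 0 < lam) :
    1 - softmax q lam astar ≤ Fintype.card A * exp (-g / lam) := by
  rw [softmax_eq_inv]
  set R := ∑ b ∈ univ.erase astar, exp ((q b - q astar) / lam)
  have hR : 0 ≤ R := sum_nonneg fun _ _ => (exp_pos _).le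
  have hRle : R ≤ Fintype.card A * exp (-g / lam) :=
    calc R ≤ ∑ _b ∈ univ.erase astar, exp (-g / lam) := by
          refine sum_le_sum fun b hb => exp_le_exp.2 ?_
          gcongr
          linarith [hgap b (ne_of_mem_erase hb)]
      _ = (#(univ.erase astar) : ℝ) * exp (-g / lam) := by rw [sum_const, nsmul_eq_mul]
      _ ≤ Fintype.card A * exp (-g / lam) := by
          gcongr
          exact_mod_cast (card_erase_le).trans_eq card_univ
  calc 1 - (1 + R)⁻¹ = R / (1 + R) := by field_simp; ring
    _ ≤ R := div_le_self hR (le_add_of_nonneg_right hR)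
    _ ≤ _ := hRle

lemma softmax_le_of_gap (hgap : ∀ a, a ≠ astar → q a ≤ q astar - g) (hlam : 0 < lam)
    {a : A} (ha : a ≠ astar) :
    softmax q lam a ≤ exp (-g / lam) := by
  rw [softmax_eq_inv, neg_div, exp_neg]
  have hterm : exp (g / lam) ≤ exp ((q astar - q a) / lam) := by
    gcongr
    linarith [hgap a ha]
  have hsum : exp ((q astar - q a) / lam) ≤ ∑ b ∈ univ.erase a, exp ((q b - q a) / lam) :=
    single_le_sum (f := fun b => exp ((q b - q a) / lam)) (fun _ _ => (exp_pos _).le)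
      (mem_erase.2 ⟨Ne.symm ha, mem_univ _⟩)
  exact inv_anti₀ (exp_pos _) (by linarith)

lemma abs_softmax_sub_ite_le_of_gap (hgap : ∀ a, a ≠ astar → q a ≤ q astar - g)
    (hlam : 0 < lam) (a : A) :
    |softmax q lam a - (if a = astar then (1 : ℝ) else 0)| ≤
      Fintype.card A * exp (-g / lam) := by
  split_ifs with ha
  · subst ha
    rw [abs_sub_comm, abs_of_nonneg (sub_nonneg.2 (softmax_le_one q lam a))]
    exact one_sub_softmax_le_of_gap hgap hlam
  · have hcard : (1 : ℝ) ≤ Fintype.card A := by exact_mod_cast Fintype.card_pos_iff.2 ⟨a⟩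
    rw [sub_zero, abs_of_nonneg (softmax_nonneg q lam a)]
    exact (softmax_le_of_gap hgap hlam ha).trans (le_mul_of_one_le_left (exp_pos _).le hcard)

end Softmax

theorem softmax_vs_greedy_general {A : Type*} [Fintype A] [DecidableEq A] [Nonempty A]
    (Qstar : A → ℝ) (astar : A) (g : ℝ)
    (hgap : ∀ a, a ≠ astar → Qstar a ≤ Qstar astar - g)
    (lam : ℝ) (hlam : 0 < lam) (Q : A → ℝ) :
    ∀ a, |softmax Q lam a - (if a = astar then (1 : ℝ) else 0)| ≤
      (univ.sup' univ_nonempty fun x => |Q x - Qstar x|) / lam +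
        (Fintype.card A : ℝ) * Real.exp (-g / lam) := by
  intro a
  have hdist : ∀ b, |Q b - Qstar b| ≤ univ.sup' univ_nonempty fun x => |Q x - Qstar x| :=
    fun b => le_sup' (fun x => |Q x - Qstar x|) (mem_univ b)
  calc _ ≤ |softmax Q lam a - softmax Qstar lam a|
        + |softmax Qstar lam a - (if a = astar then (1 : ℝ) else 0)| := abs_sub_le _ _ _
    _ ≤ _ := add_le_add (abs_softmax_sub_softmax_le hlam hdist a)
        (abs_softmax_sub_ite_le_of_gap hgap hlam a)

theorem softmax_vs_greedy {A : Type*} [Fintype A] [DecidableEq A] [Nonempty A]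
    (Qstar : A → ℝ) (astar : A) (g : ℝ) (hg : 0 < g)
    (hgap : ∀ a, a ≠ astar → Qstar a ≤ Qstar astar - g)
    (lam : ℝ) (hlam : 0 < lam) (Q : A → ℝ) :
    ∀ a, |softmax Q lam a - (if a = astar then (1 : ℝ) else 0)| ≤
      (univ.sup' univ_nonempty fun x => |Q x - Qstar x|) / lam +
        (Fintype.card A : ℝ) * Real.exp (-g / lam) :=
  softmax_vs_greedy_general Qstar astar g hgap lam hlam Q
end

section
/- Let μ be a probability distribution on the finite set S × A, and for Q : S × A → ℝ define the operator (F̄Q)(s,a) := (1 − μ(s,a))·Q(s,a) + μ(s,a)·( r(s,a) + γ·Σ_{s'} p(s,a,s')·max_{a'} Q(s',a') ). Then F̄ is a contraction in the sup norm with contraction factor at most 1 − (1−γ)·μ_min, where μ_min := min_{(s,a)} μ(s,a): i.e., ‖F̄Q − F̄Q'‖_∞ ≤ (1 − (1−γ)·μ_min)·‖Q − Q'‖_∞ for all Q, Q'. -/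
/-!
Write `T` for the Bellman optimality backup `(T Q)(s,a) = r(s,a) + γ ∑ p(s,a,s') max_{a'} Q(s',a')`.
Since `max` over a finite set is 1-Lipschitz in the sup norm and `p(s,a,·)` is a probability vector,
`T` is a `γ`-contraction pointwise. The averaged operator at `(s,a)` is the convex combination
`(1 - μ(s,a)) Q + μ(s,a) T Q`, so its pointwise Lipschitz constant is `1 - (1 - γ) μ(s,a)`,
which is at most `1 - (1 - γ) μ_min`.
-/

open Finset

section Order

variable {ι α : Type*} [AddCommGroup α] [LinearOrder α] [IsOrderedAddMonoid α]

theorem Finset.sup'_le_sup'_add {s : Finset ι} (hs : s.Nonempty) {f g : ι → α} {C : α}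
    (h : ∀ i ∈ s, f i ≤ g i + C) : s.sup' hs f ≤ s.sup' hs g + C := by
  rw [sup'_add]
  exact sup'_mono_fun h

theorem Finset.abs_sup'_sub_sup'_le {s : Finset ι} (hs : s.Nonempty) {f g : ι → α} {C : α}
    (h : ∀ i ∈ s, |f i - g i| ≤ C) : |s.sup' hs f - s.sup' hs g| ≤ C := by
  rw [abs_sub_le_iff, sub_le_iff_le_add', sub_le_iff_le_add']
  exact ⟨sup'_le_sup'_add hs fun i hi => sub_le_iff_le_add'.1 (abs_sub_le_iff.1 (h i hi)).1,
    sup'_le_sup'_add hs fun i hi => sub_le_iff_le_add'.1 (abs_sub_le_iff.1 (h i hi)).2⟩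

end Order

theorem Finset.abs_sum_mul_le_of_sum_eq_one {ι : Type*} {s : Finset ι} {w x : ι → ℝ} {C : ℝ}
    (hw0 : ∀ i ∈ s, 0 ≤ w i) (hw1 : ∑ i ∈ s, w i = 1) (hx : ∀ i ∈ s, |x i| ≤ C) :
    |∑ i ∈ s, w i * x i| ≤ C :=
  calc |∑ i ∈ s, w i * x i| ≤ ∑ i ∈ s, |w i * x i| := abs_sum_le_sum_abs _ _
    _ ≤ ∑ i ∈ s, w i * C := sum_le_sum fun i hi => by
        rw [abs_mul, abs_of_nonneg (hw0 i hi)]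
        exact mul_le_mul_of_nonneg_left (hx i hi) (hw0 i hi)
    _ = C := by rw [← sum_mul, hw1, one_mul]

theorem abs_convex_update_sub_le {m γ x x' y y' M : ℝ} (hm0 : 0 ≤ m) (hm1 : m ≤ 1)
    (hx : |x - x'| ≤ M) (hy : |y - y'| ≤ γ * M) :
    |((1 - m) * x + m * y) - ((1 - m) * x' + m * y')| ≤ (1 - (1 - γ) * m) * M :=
  calc |((1 - m) * x + m * y) - ((1 - m) * x' + m * y')|
        = |(1 - m) * (x - x') + m * (y - y')| := by congr 1; ring
    _ ≤ |(1 - m) * (x - x')| + |m * (y - y')| := abs_add_le _ _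
    _ = (1 - m) * |x - x'| + m * |y - y'| := by
        rw [abs_mul, abs_mul, abs_of_nonneg (sub_nonneg.2 hm1), abs_of_nonneg hm0]
    _ ≤ (1 - m) * M + m * (γ * M) := by gcongr
    _ = (1 - (1 - γ) * m) * M := by ring

section Bellman

variable {S A : Type*} [Fintype S] [Fintype A] [Nonempty A]

noncomputable def bellmanBackup (p : S → A → S → ℝ) (r : S → A → ℝ) (γ : ℝ)
    (Q : S → A → ℝ) (s : S) (a : A) : ℝ :=
  r s a + γ * ∑ s', p s a s' * univ.sup' univ_nonempty (Q s')

theorem abs_bellmanBackup_sub_le {p : S → A → S → ℝ} (hp0 : ∀ s a s', 0 ≤ p s a s')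
    (hp1 : ∀ s a, ∑ s', p s a s' = 1) (r : S → A → ℝ) {γ : ℝ} (hγ : 0 ≤ γ)
    {Q Q' : S → A → ℝ} {M : ℝ} (hQ : ∀ s a, |Q s a - Q' s a| ≤ M) (s : S) (a : A) :
    |bellmanBackup p r γ Q s a - bellmanBackup p r γ Q' s a| ≤ γ * M := by
  have hmax : ∀ s', |univ.sup' univ_nonempty (Q s') - univ.sup' univ_nonempty (Q' s')| ≤ M :=
    fun s' => abs_sup'_sub_sup'_le _ fun a' _ => hQ s' a'
  have hexp := abs_sum_mul_le_of_sum_eq_one (fun s' _ => hp0 s a s') (hp1 s a)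
    fun s' _ => hmax s'
  have hdiff : bellmanBackup p r γ Q s a - bellmanBackup p r γ Q' s a =
      γ * ∑ s', p s a s' *
        (univ.sup' univ_nonempty (Q s') - univ.sup' univ_nonempty (Q' s')) := by
    simp only [bellmanBackup, mul_sub, sum_sub_distrib]
    ring
  rw [hdiff, abs_mul, abs_of_nonneg hγ]
  exact mul_le_mul_of_nonneg_left hexp hγ
end Bellman

theorem averaged_bellman_contraction
    {S A : Type*} [Fintype S] [Fintype A] [Nonempty S] [Nonempty A]
    (p : S → A → S → ℝ) (hp0 : ∀ s a s', 0 ≤ p s a s') (hp1 : ∀ s a, ∑ s', p s a s' = 1)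
    (r : S → A → ℝ) (γ : ℝ) (hγ : γ ∈ Set.Ioo (0 : ℝ) 1)
    (μ : S → A → ℝ) (hμ0 : ∀ s a, 0 ≤ μ s a) (hμ1 : ∑ s, ∑ a, μ s a = 1) :
    ∀ Q Q' : S → A → ℝ, ∀ s a,
      |((1 - μ s a) * Q s a +
          μ s a * (r s a + γ * ∑ s', p s a s' * (univ.sup' univ_nonempty fun a' => Q s' a'))) -
        ((1 - μ s a) * Q' s a +
          μ s a * (r s a + γ * ∑ s', p s a s' * (univ.sup' univ_nonempty fun a' => Q' s' a')))| ≤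
      (1 - (1 - γ) * (univ.inf' univ_nonempty fun sa : S × A => μ sa.1 sa.2)) *
        (univ.sup' univ_nonempty fun sa : S × A => |Q sa.1 sa.2 - Q' sa.1 sa.2|) := by
  intro Q Q' s a
  set M := univ.sup' univ_nonempty fun sa : S × A => |Q sa.1 sa.2 - Q' sa.1 sa.2|
  have hQ : ∀ s a, |Q s a - Q' s a| ≤ M := fun s a =>
    le_sup' (fun sa : S × A => |Q sa.1 sa.2 - Q' sa.1 sa.2|) (mem_univ (s, a))
  have hμ_le_one : μ s a ≤ 1 := by
    rw [← hμ1, ← Fintype.sum_prod_type']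
    exact single_le_sum (fun sa _ => hμ0 sa.1 sa.2) (mem_univ (s, a))
  have hμ_min : (univ.inf' univ_nonempty fun sa : S × A => μ sa.1 sa.2) ≤ μ s a :=
    inf'_le (fun sa : S × A => μ sa.1 sa.2) (mem_univ (s, a))
  have hM : 0 ≤ M := (abs_nonneg _).trans (hQ s a)
  calc _ ≤ (1 - (1 - γ) * μ s a) * M :=
        abs_convex_update_sub_le (hμ0 s a) hμ_le_one (hQ s a)
          (abs_bellmanBackup_sub_le hp0 hp1 r hγ.1.le hQ s a)
    _ ≤ _ := by gcongr; linarith [hγ.2]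
end

section
/- Let P and P' be row-stochastic matrices on a finite state space S, let r : S → [0, R_max], and γ ∈ (0,1). Define V(s) := Σ_{ℓ≥0} γ^ℓ Σ_j (P^ℓ)(s,j)·r(j) and V'(s) analogously with P'. Then for every state s, |V(s) − V'(s)| ≤ R_max·‖P − P'‖_∞·γ/(1−γ)². -/
/-!
Row-stochastic matrices have norm at most one for the `ℓ∞` operator norm, which is `rowNorm`, so
the telescoping `a ^ (n + 1) - b ^ (n + 1) = a ^ n * (a - b) + (a ^ n - b ^ n) * b` gives
`‖P ^ ℓ - P' ^ ℓ‖ ≤ ℓ * ‖P - P'‖`. The `ℓ`-th terms of the two value functions therefore differ by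
at most `Rmax * ‖P - P'‖ * ℓ * γ ^ ℓ`, and `∑ ℓ, ℓ * γ ^ ℓ = γ / (1 - γ) ^ 2`.
-/

open Finset

noncomputable def rowNorm {S : Type*} [Fintype S] [Nonempty S] (A : Matrix S S ℝ) : ℝ :=
  univ.sup' univ_nonempty (fun i => ∑ j, |A i j|)

open Matrix

open scoped Matrix.Norms.Operator

lemma norm_pow_sub_pow_le_of_norm_le_one {R : Type*} [SeminormedRing R] [NormOneClass R]
    {a b : R} (ha : ‖a‖ ≤ 1) (hb : ‖b‖ ≤ 1) (n : ℕ) : ‖a ^ n - b ^ n‖ ≤ n * ‖a - b‖ := by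
  induction n with
  | zero => simp
  | succ n ih =>
    have hsplit : a ^ (n + 1) - b ^ (n + 1) = a ^ n * (a - b) + (a ^ n - b ^ n) * b := by
      noncomm_ring
    have hpow : ‖a ^ n‖ ≤ 1 := (norm_pow_le a n).trans (pow_le_one₀ (norm_nonneg a) ha)
    calc ‖a ^ (n + 1) - b ^ (n + 1)‖ ≤ ‖a ^ n‖ * ‖a - b‖ + ‖a ^ n - b ^ n‖ * ‖b‖ := by
          rw [hsplit]
          exact (norm_add_le _ _).trans (add_le_add (norm_mul_le _ _) (norm_mul_le _ _))
      _ ≤ 1 * ‖a - b‖ + n * ‖a - b‖ * 1 := by gcongr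
      _ = (n + 1 : ℕ) * ‖a - b‖ := by push_cast; ring

lemma Matrix.linfty_opNorm_le_one_of_mem_rowStochastic {n : Type*} [Fintype n] [DecidableEq n]
    {M : Matrix n n ℝ} (hM : M ∈ rowStochastic ℝ n) : ‖M‖ ≤ 1 := by
  rw [linfty_opNorm_def, NNReal.coe_le_one]
  refine Finset.sup_le fun i _ => ?_
  rw [← NNReal.coe_le_one]
  push_cast
  simp only [Real.norm_of_nonneg (nonneg_of_mem_rowStochastic hM),
    sum_row_of_mem_rowStochastic hM, le_refl]

lemma rowNorm_eq_linfty_opNorm {S : Type*} [Fintype S] [Nonempty S] (A : Matrix S S ℝ) :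
    rowNorm A = ‖A‖ := by
  rw [linfty_opNorm_def, ← Finset.sup'_eq_sup univ_nonempty,
    Finset.apply_sup'_eq_sup'_comp univ_nonempty _ (fun _ _ => NNReal.coe_max _ _)]
  simp only [rowNorm, Function.comp_def, NNReal.coe_sum, coe_nnnorm, Real.norm_eq_abs]

lemma Matrix.norm_mulVec_apply_le {m n α : Type*} [Fintype m] [Fintype n]
    [SeminormedRing α] (A : Matrix m n α) (v : n → α) (i : m) : ‖(A *ᵥ v) i‖ ≤ ‖A‖ * ‖v‖ :=
  (norm_le_pi_norm (A *ᵥ v) i).trans (linfty_opNorm_mulVec A v)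

section Discounted

variable {E : Type*} [NormedAddCommGroup E] [NormedSpace ℝ E] [CompleteSpace E] {γ : ℝ}

lemma summable_geometric_smul_of_norm_le (hγ0 : 0 ≤ γ) (hγ1 : γ < 1) {a : ℕ → E} {C : ℝ}
    (ha : ∀ ℓ, ‖a ℓ‖ ≤ C) : Summable fun ℓ => γ ^ ℓ • a ℓ :=
  .of_norm_bounded ((summable_geometric_of_lt_one hγ0 hγ1).mul_right C) fun ℓ => by
    rw [norm_smul, norm_pow, Real.norm_of_nonneg hγ0]
    exact mul_le_mul_of_nonneg_left (ha ℓ) (pow_nonneg hγ0 ℓ)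

lemma norm_tsum_geometric_smul_sub_le (hγ0 : 0 ≤ γ) (hγ1 : γ < 1) {a b : ℕ → E} {C K : ℝ}
    (ha : ∀ ℓ, ‖a ℓ‖ ≤ C) (hb : ∀ ℓ, ‖b ℓ‖ ≤ C) (hab : ∀ ℓ, ‖a ℓ - b ℓ‖ ≤ ℓ * K) :
    ‖∑' ℓ, γ ^ ℓ • a ℓ - ∑' ℓ, γ ^ ℓ • b ℓ‖ ≤ K * (γ / (1 - γ) ^ 2) := by
  have hγ : ‖γ‖ < 1 := by rwa [Real.norm_of_nonneg hγ0]
  rw [← (summable_geometric_smul_of_norm_le hγ0 hγ1 ha).tsum_sub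
    (summable_geometric_smul_of_norm_le hγ0 hγ1 hb)]
  refine tsum_of_norm_bounded ((hasSum_coe_mul_geometric_of_norm_lt_one hγ).mul_left K)
    fun ℓ => ?_
  rw [← smul_sub, norm_smul, norm_pow, Real.norm_of_nonneg hγ0]
  calc γ ^ ℓ * ‖a ℓ - b ℓ‖ ≤ γ ^ ℓ * (ℓ * K) := by gcongr; exact hab ℓ
    _ = K * (ℓ * γ ^ ℓ) := by ring

end Discounted

theorem value_function_perturbation {S : Type*} [Fintype S] [Nonempty S] [DecidableEq S]
    (P P' : Matrix S S ℝ)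
    (hP0 : ∀ i j, 0 ≤ P i j) (hP1 : ∀ i, ∑ j, P i j = 1)
    (hP'0 : ∀ i j, 0 ≤ P' i j) (hP'1 : ∀ i, ∑ j, P' i j = 1)
    (r : S → ℝ) (Rmax γ : ℝ)
    (hr : ∀ s, r s ∈ Set.Icc (0 : ℝ) Rmax) (hγ : γ ∈ Set.Ioo (0 : ℝ) 1) (s : S) :
    |(∑' ℓ : ℕ, γ ^ ℓ * ∑ j, (P ^ ℓ) s j * r j) -
        (∑' ℓ : ℕ, γ ^ ℓ * ∑ j, (P' ^ ℓ) s j * r j)| ≤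
      Rmax * rowNorm (P - P') * (γ / (1 - γ) ^ 2) := by
  have hP : P ∈ rowStochastic ℝ S := mem_rowStochastic_iff_sum.2 ⟨hP0, hP1⟩
  have hP' : P' ∈ rowStochastic ℝ S := mem_rowStochastic_iff_sum.2 ⟨hP'0, hP'1⟩
  have hr_norm : ‖r‖ ≤ Rmax :=
    (pi_norm_le_iff_of_nonneg ((hr s).1.trans (hr s).2)).2 fun j => by
      rw [Real.norm_of_nonneg (hr j).1]; exact (hr j).2
  have hvalue (Q : Matrix S S ℝ) (hQ : Q ∈ rowStochastic ℝ S) (ℓ : ℕ) :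
      ‖(Q ^ ℓ *ᵥ r) s‖ ≤ Rmax :=
    (norm_mulVec_apply_le _ r s).trans <| (mul_le_of_le_one_left (norm_nonneg r)
      (linfty_opNorm_le_one_of_mem_rowStochastic (pow_mem hQ ℓ))).trans hr_norm
  have hdiff (ℓ : ℕ) : ‖(P ^ ℓ *ᵥ r) s - (P' ^ ℓ *ᵥ r) s‖ ≤ ℓ * (‖P - P'‖ * Rmax) := by
    rw [← Pi.sub_apply, ← sub_mulVec, ← mul_assoc]
    exact (norm_mulVec_apply_le _ r s).trans <| mul_le_mul
      (norm_pow_sub_pow_le_of_norm_le_one (linfty_opNorm_le_one_of_mem_rowStochastic hP)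
        (linfty_opNorm_le_one_of_mem_rowStochastic hP') ℓ) hr_norm (norm_nonneg r) (by positivity)
  have hbound := norm_tsum_geometric_smul_sub_le hγ.1.le hγ.2 (hvalue P hP) (hvalue P' hP') hdiff
  rw [rowNorm_eq_linfty_opNorm, ← Real.norm_eq_abs]
  simpa only [smul_eq_mul, mul_comm Rmax, mulVec, dotProduct] using hbound
end

section
/- Let a, b > 0, ρ ∈ (0,1], ρ' ∈ (ρ, 2], n₀ ∈ ℕ, and define a_n := a/(n+n₀)^ρ and b_n := b/(n+n₀)^{ρ'}, assuming a_n ∈ [0,1] for all n. Define S_n := Σ_{i=0}^{n-1} b_i · Π_{j=i+1}^{n-1} (1 − a_j). If ρ = 1, ρ' ∈ (1,2], and a ≥ 2(ρ'−1), then S_n ≤ 2·b_n/a_n for all n ≥ 1. -/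
open Finset

/-!
Since `S₀ = 0` and `S_{n+1} = S_n (1 - a_n) + b_n`, it suffices that `c_n = 2 b_n / a_n`
is a supersolution of this recursion, i.e. `c_n - b_n ≤ c_{n+1}`. With `m = n + n₀` and
`c_n = (2b/a) m^{1-ρ'}` this is `m^{1-ρ'} - (m+1)^{1-ρ'} ≤ (ρ' - 1) m^{-ρ'}`, which is Bernoulli's
inequality for `(1 - 1/(m+1))^{ρ'}`, combined with `2(ρ' - 1) ≤ a`.
-/

theorem div_rpow_sub_div_rpow_add_one_le {p x : ℝ} (hp : 1 ≤ p) (hx : 0 < x) :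
    x / x ^ p - (x + 1) / (x + 1) ^ p ≤ (p - 1) / x ^ p := by
  have hx1 : 0 < x + 1 := by linarith
  have bernoulli := one_add_mul_self_le_rpow_one_add (s := -1 / (x + 1))
    (by rw [neg_div, neg_le_neg_iff, div_le_one hx1]; linarith) hp
  have hbase : 1 + -1 / (x + 1) = x / (x + 1) := by field_simp; ring
  rw [hbase, Real.div_rpow hx.le hx1.le, le_div_iff₀ (by positivity)] at bernoulli
  field_simp at bernoulli
  have hdiff : x / x ^ p - (x + 1) / (x + 1) ^ p - (p - 1) / x ^ p =
      ((x + 1 - p) * (x + 1) ^ p - (x + 1) * x ^ p) / (x ^ p * (x + 1) ^ p) := by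
    field_simp
    ring
  have hnonpos : x / x ^ p - (x + 1) / (x + 1) ^ p - (p - 1) / x ^ p ≤ 0 := by
    rw [hdiff]
    exact div_nonpos_of_nonpos_of_nonneg (by linarith) (by positivity)
  linarith

def discountedSum {R : Type*} [CommRing R] (A B : ℕ → R) (n : ℕ) : R :=
  ∑ i ∈ range n, B i * ∏ j ∈ Ico (i + 1) n, (1 - A j)

theorem discountedSum_succ {R : Type*} [CommRing R] (A B : ℕ → R) (n : ℕ) :
    discountedSum A B (n + 1) = discountedSum A B n * (1 - A n) + B n := by
  simp only [discountedSum, sum_range_succ, Ico_self, prod_empty, mul_one, sum_mul]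
  congr 1
  refine sum_congr rfl fun i hi => ?_
  rw [prod_Ico_succ_top (mem_range.mp hi), mul_assoc]

theorem discountedSum_le {R : Type*} [CommRing R] [PartialOrder R] [IsOrderedRing R]
    {A B c : ℕ → R} (hA : ∀ n, A n ≤ 1) (hc₀ : 0 ≤ c 0)
    (hc : ∀ n, c n * (1 - A n) + B n ≤ c (n + 1)) (n : ℕ) :
    discountedSum A B n ≤ c n := by
  induction n with
  | zero => simpa [discountedSum] using hc₀
  | succ n ih =>
    rw [discountedSum_succ]
    calc discountedSum A B n * (1 - A n) + B n ≤ c n * (1 - A n) + B n := by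
          gcongr
          exact sub_nonneg.mpr (hA n)
      _ ≤ c (n + 1) := hc n

theorem supersolution_two_mul_div_div {a b p x : ℝ} (ha : 0 < a) (hb : 0 ≤ b) (hp : 1 ≤ p)
    (hap : 2 * (p - 1) ≤ a) (hx : 0 ≤ x) :
    2 * (b / x ^ p) / (a / x) * (1 - a / x) + b / x ^ p ≤
      2 * (b / (x + 1) ^ p) / (a / (x + 1)) := by
  have hscale (y : ℝ) : 2 * (b / y ^ p) / (a / y) = 2 * b / a * (y / y ^ p) := by
    rw [div_div_eq_mul_div]; ring
  -- `x = 0` occurs for `n₀ = 0`, where `a₀ = b₀ = 0` by the convention `y / 0 = 0`.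
  rcases hx.eq_or_lt with rfl | hx
  · simp only [Real.zero_rpow (by linarith : p ≠ 0), div_zero, mul_zero, zero_mul, add_zero]
    positivity
  have hdecay : 2 * b / a * (x / x ^ p - (x + 1) / (x + 1) ^ p) ≤ b / x ^ p := calc
    _ ≤ 2 * b / a * ((p - 1) / x ^ p) := by gcongr; exact div_rpow_sub_div_rpow_add_one_le hp hx
    _ = 2 * (p - 1) / a * (b / x ^ p) := by ring
    _ ≤ 1 * (b / x ^ p) := by gcongr; exact (div_le_one ha).mpr hap
    _ = b / x ^ p := one_mul _
  calc 2 * (b / x ^ p) / (a / x) * (1 - a / x) + b / x ^ p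
      = 2 * b / a * (x / x ^ p) - b / x ^ p := by
        rw [hscale]; field_simp; ring
    _ ≤ 2 * b / a * ((x + 1) / (x + 1) ^ p) := by linarith
    _ = 2 * (b / (x + 1) ^ p) / (a / (x + 1)) := (hscale _).symm

theorem stepsize_comparison_rho_one_general (a b ρ ρ' : ℝ) (n₀ : ℕ)
    (ha : 0 < a) (hb : 0 < b)
    (hρ : ρ = 1) (hρ'1 : 1 < ρ') (haρ' : 2 * (ρ' - 1) ≤ a)
    (ha01 : ∀ n : ℕ, a / ((n : ℝ) + n₀) ^ ρ ∈ Set.Icc (0 : ℝ) 1) :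
    ∀ n : ℕ, 1 ≤ n →
      ∑ i ∈ Finset.range n,
          (b / ((i : ℝ) + n₀) ^ ρ') * ∏ j ∈ Finset.Ico (i + 1) n, (1 - a / ((j : ℝ) + n₀) ^ ρ) ≤
        2 * (b / ((n : ℝ) + n₀) ^ ρ') / (a / ((n : ℝ) + n₀) ^ ρ) := by
  subst hρ
  simp only [Real.rpow_one] at ha01 ⊢
  intro n _
  refine discountedSum_le (c := fun m : ℕ => 2 * (b / ((m : ℝ) + n₀) ^ ρ') / (a / ((m : ℝ) + n₀)))
    (fun j => (ha01 j).2) (by positivity) (fun k => ?_) n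
  have hstep := supersolution_two_mul_div_div ha hb.le hρ'1.le haρ' (x := (k : ℝ) + n₀) (by positivity)
  simpa only [Nat.cast_succ, add_right_comm] using hstep

theorem stepsize_comparison_rho_one (a b ρ ρ' : ℝ) (n₀ : ℕ)
    (ha : 0 < a) (hb : 0 < b)
    (hρ : ρ = 1) (hρ'1 : 1 < ρ') (hρ'2 : ρ' ≤ 2) (haρ' : 2 * (ρ' - 1) ≤ a)
    (ha01 : ∀ n : ℕ, a / ((n : ℝ) + n₀) ^ ρ ∈ Set.Icc (0 : ℝ) 1) :
    ∀ n : ℕ, 1 ≤ n →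
      ∑ i ∈ Finset.range n,
          (b / ((i : ℝ) + n₀) ^ ρ') * ∏ j ∈ Finset.Ico (i + 1) n, (1 - a / ((j : ℝ) + n₀) ^ ρ) ≤
        2 * (b / ((n : ℝ) + n₀) ^ ρ') / (a / ((n : ℝ) + n₀) ^ ρ) :=
  stepsize_comparison_rho_one_general a b ρ ρ' n₀ ha hb hρ hρ'1 haρ' ha01
end

section
/- Let a, b > 0, ρ ∈ (0,1), ρ' > ρ, and a_n := a/(n+n₀)^ρ, b_n := b/(n+n₀)^{ρ'}, with a_n ∈ [0,1] for all n. Define S_n := Σ_{i=0}^{n-1} b_i · Π_{j=i+1}^{n-1} (1 − a_j). If n₀ ≥ (2(ρ'−ρ)/a)^{1/(1−ρ)}, then S_n ≤ 2·b_n/a_n for all n ≥ 1. -/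
open Finset

/-! Writing `S n` for the sum, `S 0 = 0` and `S (n + 1) = (1 - a_n) S n + b_n`, so `S n ≤ C n`
follows by induction from `n = 0` once `C n = 2 b_n / a_n` is a supersolution of this recursion. As
`a_n C n = 2 b_n`, that means `C n - C (n + 1) ≤ b_n`. With `x = n + n₀` and `δ = ρ' - ρ` we have
`C n = (2b/a) x^{-δ}`, and by the mean value theorem
`C n - C (n + 1) ≤ (2b/a) δ x^{-δ-1} = b_n · (2δ/a) / x^{1-ρ}`; the lower bound on `n₀` makes the
last factor at most `1`. -/

lemma rpow_neg_sub_rpow_neg_add_one_le {δ x : ℝ} (hδ : 0 ≤ δ) (hx : 0 < x) :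
    x ^ (-δ) - (x + 1) ^ (-δ) ≤ δ * x ^ (-δ - 1) := by
  obtain ⟨c, hc, hslope⟩ := exists_hasDerivAt_eq_slope (fun t : ℝ => t ^ (-δ))
      (fun t => -δ * t ^ (-δ - 1)) (lt_add_one x)
      (continuousOn_id.rpow_const fun t ht => Or.inl (hx.trans_le ht.1).ne')
      (fun t ht => Real.hasDerivAt_rpow_const (Or.inl (hx.trans ht.1).ne'))
  simp only [add_sub_cancel_left, div_one] at hslope
  calc x ^ (-δ) - (x + 1) ^ (-δ) = δ * c ^ (-δ - 1) := by linarith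
    _ ≤ δ * x ^ (-δ - 1) :=
      mul_le_mul_of_nonneg_left (Real.rpow_le_rpow_of_nonpos hx hc.1.le (by linarith)) hδ

section DampedSum

variable (α β : ℕ → ℝ)

def dampedSum (n : ℕ) : ℝ :=
  ∑ i ∈ range n, β i * ∏ j ∈ Ico (i + 1) n, (1 - α j)

@[simp]
lemma dampedSum_zero : dampedSum α β 0 = 0 := by
  simp [dampedSum]

lemma dampedSum_succ (n : ℕ) : dampedSum α β (n + 1) = (1 - α n) * dampedSum α β n + β n := by
  rw [dampedSum, dampedSum, sum_range_succ, Ico_self, prod_empty, mul_one, mul_sum]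
  congr 1
  refine sum_congr rfl fun i hi => ?_
  rw [prod_Ico_succ_top (mem_range.mp hi)]
  ring

variable {α β}

lemma dampedSum_le_of_supersolution {C : ℕ → ℝ} (hα : ∀ n, α n ≤ 1) (hC₀ : 0 ≤ C 0)
    (hC : ∀ n, (1 - α n) * C n + β n ≤ C (n + 1)) (n : ℕ) : dampedSum α β n ≤ C n := by
  induction n with
  | zero => simpa using hC₀
  | succ n ih =>
    rw [dampedSum_succ]
    exact le_trans (by gcongr; linarith [hα n]) (hC n)

lemma dampedSum_le_two_mul_div (hα₀ : ∀ n, 0 < α n) (hα₁ : ∀ n, α n ≤ 1) (hβ₀ : 0 ≤ β 0)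
    (hstep : ∀ n, 2 * β n / α n - β n ≤ 2 * β (n + 1) / α (n + 1)) (n : ℕ) :
    dampedSum α β n ≤ 2 * β n / α n := by
  refine dampedSum_le_of_supersolution (C := fun n => 2 * β n / α n) hα₁
    (by have := hα₀ 0; positivity) (fun n => ?_) n
  have := (hα₀ n).ne'
  calc (1 - α n) * (2 * β n / α n) + β n = 2 * β n / α n - β n := by field_simp; ring
    _ ≤ 2 * β (n + 1) / α (n + 1) := hstep n

end DampedSum

lemma two_mul_div_rpow_div_div_rpow {a b ρ ρ' x : ℝ} (hx : 0 < x) :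
    2 * (b / x ^ ρ') / (a / x ^ ρ) = 2 * b / a * x ^ (-(ρ' - ρ)) := by
  have := (Real.rpow_pos_of_pos hx ρ).ne'
  rw [neg_sub, Real.rpow_sub hx]
  field_simp

lemma two_mul_div_rpow_div_div_rpow_sub_le {a b ρ ρ' x : ℝ} (ha : 0 < a) (hb : 0 ≤ b)
    (hρ' : ρ ≤ ρ') (hx : 0 < x) (hx_large : 2 * (ρ' - ρ) / a ≤ x ^ (1 - ρ)) :
    2 * (b / x ^ ρ') / (a / x ^ ρ) - b / x ^ ρ' ≤ 2 * (b / (x + 1) ^ ρ') / (a / (x + 1) ^ ρ) := by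
  rw [two_mul_div_rpow_div_div_rpow hx, two_mul_div_rpow_div_div_rpow (by positivity)]
  set δ := ρ' - ρ
  suffices 2 * b / a * (x ^ (-δ) - (x + 1) ^ (-δ)) ≤ b / x ^ ρ' by linear_combination this
  calc 2 * b / a * (x ^ (-δ) - (x + 1) ^ (-δ))
      ≤ 2 * b / a * (δ * x ^ (-δ - 1)) := by
        gcongr
        exact rpow_neg_sub_rpow_neg_add_one_le (by linarith) hx
    _ = b * (2 * δ / a) / x ^ (1 - ρ) / x ^ ρ' := by
        rw [show -δ - 1 = -(1 - ρ) - ρ' by ring, Real.rpow_sub hx, Real.rpow_neg hx.le]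
        field_simp
    _ ≤ b * x ^ (1 - ρ) / x ^ (1 - ρ) / x ^ ρ' := by gcongr
    _ = b / x ^ ρ' := by field_simp

theorem stepsize_comparison_rho_lt_one_general (a b ρ ρ' : ℝ) (n₀ : ℕ)
    (ha : 0 < a) (hb : 0 < b)
    (hρ1 : ρ < 1) (hρ' : ρ < ρ')
    (ha01 : ∀ n : ℕ, a / ((n : ℝ) + n₀) ^ ρ ∈ Set.Icc (0 : ℝ) 1)
    (hn₀ : (2 * (ρ' - ρ) / a) ^ (1 / (1 - ρ)) ≤ (n₀ : ℝ)) :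
    ∀ n : ℕ, 1 ≤ n →
      ∑ i ∈ Finset.range n,
          (b / ((i : ℝ) + n₀) ^ ρ') * ∏ j ∈ Finset.Ico (i + 1) n, (1 - a / ((j : ℝ) + n₀) ^ ρ) ≤
        2 * (b / ((n : ℝ) + n₀) ^ ρ') / (a / ((n : ℝ) + n₀) ^ ρ) := by
  have hgap : 0 < 2 * (ρ' - ρ) / a := div_pos (by linarith) ha
  have hn₀_large : 2 * (ρ' - ρ) / a ≤ (n₀ : ℝ) ^ (1 - ρ) := by
    rwa [one_div, Real.rpow_inv_le_iff_of_pos hgap.le (Nat.cast_nonneg _) (by linarith)] at hn₀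
  have hn₀_pos : (0 : ℝ) < n₀ := (Real.rpow_pos_of_pos hgap _).trans_le hn₀
  have hx : ∀ k : ℕ, (0 : ℝ) < k + n₀ := fun k => by positivity
  intro n _
  apply dampedSum_le_two_mul_div
  case hα₀ => exact fun k => div_pos ha (Real.rpow_pos_of_pos (hx k) ρ)
  case hα₁ => exact fun k => (ha01 k).2
  case hβ₀ => positivity
  case hstep =>
    intro k
    rw [Nat.cast_succ, add_right_comm]
    exact two_mul_div_rpow_div_div_rpow_sub_le ha hb.le hρ'.le (hx k) <|
      hn₀_large.trans (Real.rpow_le_rpow hn₀_pos.le (by simp) (by linarith))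

theorem stepsize_comparison_rho_lt_one (a b ρ ρ' : ℝ) (n₀ : ℕ)
    (ha : 0 < a) (hb : 0 < b)
    (hρ0 : 0 < ρ) (hρ1 : ρ < 1) (hρ' : ρ < ρ')
    (ha01 : ∀ n : ℕ, a / ((n : ℝ) + n₀) ^ ρ ∈ Set.Icc (0 : ℝ) 1)
    (hn₀ : (2 * (ρ' - ρ) / a) ^ (1 / (1 - ρ)) ≤ (n₀ : ℝ)) :
    ∀ n : ℕ, 1 ≤ n →
      ∑ i ∈ Finset.range n,
          (b / ((i : ℝ) + n₀) ^ ρ') * ∏ j ∈ Finset.Ico (i + 1) n, (1 - a / ((j : ℝ) + n₀) ^ ρ) ≤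
        2 * (b / ((n : ℝ) + n₀) ^ ρ') / (a / ((n : ℝ) + n₀) ^ ρ) :=
  stepsize_comparison_rho_lt_one_general a b ρ ρ' n₀ ha hb hρ1 hρ' ha01 hn₀
end
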